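/- Let r ≥ 2 and for each k let λ⁽ᵏ⁾, λ'⁽ᵏ⁾ ∈ ℝ^{n_k} be vectors of nonnegative numbers, and σ², σ'² ≥ 0. Suppose σ² + ∏_{k=1}^r λ⁽ᵏ⁾_{i_k} = σ'² + ∏_{k=1}^r λ'⁽ᵏ⁾_{i_k} for all index tuples (i₁,…,i_r). If some λ⁽ᵏ⁾ has a zero entry and each λ⁽ᵏ⁾ has a nonzero entry, then σ² = σ'². -/

import Mathlib

/-! Evaluating the identity at an index tuple that passes through a zero entry of `λ'` kills
the product on the right, so `σ² = σ'² - ∏ₖ λ⁽ᵏ⁾_{i_k} ≤ σ'²`; a zero entry of `λ` gives the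
reverse inequality. Such tuples exist because every index set is nonempty. -/

theorem Fintype.exists_prod_eq_zero {ι R : Type*} [Fintype ι] [CommMonoidWithZero R]
    {α : ι → Type*} (f : ∀ k, α k → R) [hne : ∀ k, Nonempty (α k)]
    (hzero : ∃ k j, f k j = 0) : ∃ i : ∀ k, α k, ∏ k, f k (i k) = 0 := by
  classical
  obtain ⟨k₀, j₀, h⟩ := hzero
  refine ⟨Function.update (fun k => (hne k).some) k₀ j₀,
    Finset.prod_eq_zero (Finset.mem_univ k₀) ?_⟩
  simpa using h

theorem le_of_forall_add_eq_add {ι M : Type*} [AddCommMonoid M] [PartialOrder M]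
    [IsOrderedAddMonoid M] {f g : ι → M} {a b : M} (h : ∀ i, a + f i = b + g i)
    (hg : ∀ i, 0 ≤ g i) (hf : ∃ i, f i = 0) : b ≤ a := by
  obtain ⟨i, hi⟩ := hf
  calc b ≤ b + g i := le_add_of_nonneg_right (hg i)
    _ = a := by rw [← h i, hi, add_zero]

theorem identifiability_sigma_eq_general {r : ℕ} {n : Fin r → ℕ}
    (lam lam' : ∀ k, Fin (n k) → ℝ)
    (hlam : ∀ k j, 0 ≤ lam k j) (hlam' : ∀ k j, 0 ≤ lam' k j)
    (σ2 σ2' : ℝ)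
    (heq : ∀ i : ∀ k, Fin (n k), σ2 + ∏ k, lam k (i k) = σ2' + ∏ k, lam' k (i k))
    (hzero : ∃ k j, lam k j = 0) (hzero' : ∃ k j, lam' k j = 0)
    (hnonzero : ∀ k, ∃ j, lam k j ≠ 0) :
    σ2 = σ2' := by
  have : ∀ k, Nonempty (Fin (n k)) := fun k => ⟨(hnonzero k).choose⟩
  apply le_antisymm
  · exact le_of_forall_add_eq_add (fun i => (heq i).symm)
      (fun i => Finset.prod_nonneg fun k _ => hlam k (i k))
      (Fintype.exists_prod_eq_zero lam' hzero')
  · exact le_of_forall_add_eq_add heq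
      (fun i => Finset.prod_nonneg fun k _ => hlam' k (i k))
      (Fintype.exists_prod_eq_zero lam hzero)

/-- Eigenvalue-matching step of the identifiability proof: if
`σ² + ∏ₖ λ⁽ᵏ⁾_{i_k} = σ'² + ∏ₖ λ'⁽ᵏ⁾_{i_k}` for all index tuples, some `λ⁽ᵏ⁾`
(for each of the two parameterizations, as both have rank-deficient `B_k`) has a zero
entry and each `λ⁽ᵏ⁾` has a nonzero entry, then `σ² = σ'²`. -/
theorem identifiability_sigma_eq {r : ℕ} (hr : 2 ≤ r) {n : Fin r → ℕ}
    (lam lam' : ∀ k, Fin (n k) → ℝ)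
    (hlam : ∀ k j, 0 ≤ lam k j) (hlam' : ∀ k j, 0 ≤ lam' k j)
    (σ2 σ2' : ℝ) (hσ2 : 0 ≤ σ2) (hσ2' : 0 ≤ σ2')
    (heq : ∀ i : ∀ k, Fin (n k), σ2 + ∏ k, lam k (i k) = σ2' + ∏ k, lam' k (i k))
    (hzero : ∃ k j, lam k j = 0) (hzero' : ∃ k j, lam' k j = 0)
    (hnonzero : ∀ k, ∃ j, lam k j ≠ 0) :
    σ2 = σ2' :=
  identifiability_sigma_eq_general lam lam' hlam hlam' σ2 σ2' heq hzero hzero' hnonzero
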